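/- Assume clause M has no duplicate atoms (no two distinct literals of M are equal or complementary). Suppose for every pair (i,j) the Boolean variable b⁺ᵢⱼ satisfies positive compatibility (b⁺ᵢⱼ → Σ⁺ᵢⱼ ⊆ σ, where Σ⁺ᵢⱼ is the unique matcher with Σ⁺ᵢⱼ(sᵢ) = mⱼ when it exists) and SAT-based partial completeness (for every i there exists j with b⁺ᵢⱼ true). Then for every i, j, if Σ⁺ᵢⱼ ⊆ σ then b⁺ᵢⱼ is true. -/

import Mathlib

/-- First-order terms over variables `V`. -/
inductive Trm (V : Type) : Type
  | var : V → Trm V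
  | fn : ℕ → Trm V
  | app : Trm V → Trm V → Trm V
deriving DecidableEq

/-- Applying a (total) substitution to a term. -/
def Trm.subst {V : Type} (σ : V → Trm V) : Trm V → Trm V
  | .var x => σ x
  | .fn f => .fn f
  | .app t u => .app (t.subst σ) (u.subst σ)

/-- A first-order literal: a polarity, a predicate symbol and an argument term. -/
structure Lit (V : Type) where
  pos : Bool
  pred : ℕ
  arg : Trm V
deriving DecidableEq

/-- The complement of a literal. -/
def Lit.neg {V : Type} (l : Lit V) : Lit V := { l with pos := !l.pos }

/-- Applying a substitution to a literal. -/
def Lit.subst {V : Type} (σ : V → Trm V) (l : Lit V) : Lit V :=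
  { l with arg := l.arg.subst σ }

/-- A clause is a multiset of literals. -/
abbrev Clause (V : Type) := Multiset (Lit V)

/-- Applying a substitution to a clause. -/
def Clause.subst {V : Type} (σ : V → Trm V) (C : Clause V) : Clause V :=
  C.map (Lit.subst σ)

/-- `S` subsumes `M`: some substitution maps `S` to a sub-multiset of `M`. -/
def Subsumes {V : Type} (S M : Clause V) : Prop :=
  ∃ σ : V → Trm V, Clause.subst σ S ≤ M

/-- `S` and `M` are side and main premises of subsumption resolution:
there are `σ`, a nonempty `S' ⊆ S` and `m' ∈ M` with `σ(S') = {¬m'}` and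
`σ(S \ S') ⊆ M \ {m'}`. -/
def SubRes {V : Type} [DecidableEq V] (S M : Clause V) : Prop :=
  ∃ (σ : V → Trm V) (S' : Clause V) (m' : Lit V),
    S' ≤ S ∧ S' ≠ 0 ∧ m' ∈ M ∧
    (∀ l ∈ S', Lit.subst σ l = m'.neg) ∧
    (∀ l ∈ S - S', Lit.subst σ l ∈ M.erase m')

/-- Partial substitutions. -/
abbrev PSub (V : Type) := V → Option (Trm V)

/-- Partial application of a partial substitution to a term. -/
def Trm.psubst {V : Type} (θ : PSub V) : Trm V → Option (Trm V)
  | .var x => θ x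
  | .fn f => some (.fn f)
  | .app t u => (t.psubst θ).bind fun t' => (u.psubst θ).map fun u' => .app t' u'

/-- Partial application of a partial substitution to a literal. -/
def Lit.psubst {V : Type} (θ : PSub V) (l : Lit V) : Option (Lit V) :=
  (l.arg.psubst θ).map fun t => { l with arg := t }

/-- `θ ⊆ σ`: the total substitution `σ` extends the partial substitution `θ`. -/
def PSub.le {V : Type} (θ : PSub V) (σ : V → Trm V) : Prop :=
  ∀ x t, θ x = some t → σ x = t

/-- The clause with literals `s 0, …, s (k-1)`. -/
def clauseOfFn {V : Type} {k : ℕ} (s : Fin k → Lit V) : Clause V :=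
  (List.ofFn s : List (Lit V))

/-- The indexed clause `m` has no duplicate literals. -/
def NoDupIdx {V : Type} {n : ℕ} (m : Fin n → Lit V) : Prop :=
  ∀ j j' : Fin n, m j = m j' → j = j'

/-- The indexed clause `m` has no duplicate atoms: no two (distinct) literals are
equal or complementary. -/
def NoDupAtomsIdx {V : Type} {n : ℕ} (m : Fin n → Lit V) : Prop :=
  (∀ j j' : Fin n, m j = m j' → j = j') ∧ (∀ j j' : Fin n, m j ≠ (m j').neg)

/-- `Sp` is the family of positive matchers `Σ⁺ᵢⱼ`: `Sp i j = some θ` exactly when a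
substitution matching `sᵢ` to `mⱼ` exists, in which case `θ` is such a (partial)
matcher and every total match is an extension of it. -/
def IsMatcherFamilyPos {V : Type} {k n : ℕ} (s : Fin k → Lit V) (m : Fin n → Lit V)
    (Sp : Fin k → Fin n → Option (PSub V)) : Prop :=
  (∀ i j θ, Sp i j = some θ → Lit.psubst θ (s i) = some (m j)) ∧
  (∀ i j (σ : V → Trm V), Lit.subst σ (s i) = m j → ∃ θ, Sp i j = some θ ∧ PSub.le θ σ)

/-- `Sn` is the family of negative matchers `Σ⁻ᵢⱼ` (matching `sᵢ` to `¬mⱼ`). -/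
def IsMatcherFamilyNeg {V : Type} {k n : ℕ} (s : Fin k → Lit V) (m : Fin n → Lit V)
    (Sn : Fin k → Fin n → Option (PSub V)) : Prop :=
  (∀ i j θ, Sn i j = some θ → Lit.psubst θ (s i) = some ((m j).neg)) ∧
  (∀ i j (σ : V → Trm V), Lit.subst σ (s i) = (m j).neg → ∃ θ, Sn i j = some θ ∧ PSub.le θ σ)

/-- The (predicate, polarity) header of a literal. -/
def Lit.header {V : Type} (l : Lit V) : ℕ × Bool := (l.pred, l.pos)

/-! If `σ` extends a matcher `Σ⁺ᵢⱼ`, then `σ(sᵢ) = mⱼ`. Completeness gives some `j'` with `b⁺ᵢⱼ'`,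
whose matcher `σ` extends by compatibility, so `mⱼ = σ(sᵢ) = mⱼ'`, and since `M` has no duplicate
literals, `j = j'`. -/

theorem Trm.subst_eq_of_psubst_eq_some {V : Type} {θ : PSub V} {σ : V → Trm V}
    (hθσ : PSub.le θ σ) : ∀ {t t' : Trm V}, t.psubst θ = some t' → t.subst σ = t'
  | .var x, _, ht => hθσ x _ ht
  | .fn _, _, ht => by simpa [Trm.psubst, Trm.subst] using ht
  | .app a c, _, ht => by
    simp only [Trm.psubst, Option.bind_eq_some_iff, Option.map_eq_some_iff] at ht
    obtain ⟨a', ha, c', hc, rfl⟩ := ht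
    rw [Trm.subst, Trm.subst_eq_of_psubst_eq_some hθσ ha, Trm.subst_eq_of_psubst_eq_some hθσ hc]

theorem Lit.subst_eq_of_psubst_eq_some {V : Type} {θ : PSub V} {σ : V → Trm V}
    (hθσ : PSub.le θ σ) {l l' : Lit V} (hl : l.psubst θ = some l') : l.subst σ = l' := by
  simp only [Lit.psubst, Option.map_eq_some_iff] at hl
  obtain ⟨t, ht, rfl⟩ := hl
  rw [Lit.subst, Trm.subst_eq_of_psubst_eq_some hθσ ht]

theorem IsMatcherFamilyPos.eq_of_le {V : Type} {k n : ℕ} {s : Fin k → Lit V}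
    {m : Fin n → Lit V} {Sp : Fin k → Fin n → Option (PSub V)} (hSp : IsMatcherFamilyPos s m Sp)
    {σ : V → Trm V} {i : Fin k} {j j' : Fin n} {θ θ' : PSub V}
    (hθ : Sp i j = some θ) (hθσ : PSub.le θ σ) (hθ' : Sp i j' = some θ') (hθ'σ : PSub.le θ' σ) :
    m j = m j' :=
  (Lit.subst_eq_of_psubst_eq_some hθσ (hSp.1 i j θ hθ)).symm.trans
    (Lit.subst_eq_of_psubst_eq_some hθ'σ (hSp.1 i j' θ' hθ'))

/-- Backward compatibility for subsumption: under positive compatibility and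
SAT-based partial completeness, `Σ⁺ᵢⱼ ⊆ σ` implies `b⁺ᵢⱼ`. -/
theorem stmt2 {V : Type} {k n : ℕ} (s : Fin k → Lit V) (m : Fin n → Lit V)
    (hM : NoDupAtomsIdx m)
    (Sp : Fin k → Fin n → Option (PSub V)) (hSp : IsMatcherFamilyPos s m Sp)
    (σ : V → Trm V) (b : Fin k → Fin n → Bool)
    (hcompat : ∀ i j, b i j = true → ∃ θ, Sp i j = some θ ∧ PSub.le θ σ)
    (hcomplete : ∀ i, ∃ j, b i j = true) :
    ∀ i j θ, Sp i j = some θ → PSub.le θ σ → b i j = true := by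
  intro i j θ hθ hθσ
  obtain ⟨j', hbj'⟩ := hcomplete i
  obtain ⟨θ', hθ', hθ'σ⟩ := hcompat i j' hbj'
  obtain rfl : j = j' := hM.1 j j' (hSp.eq_of_le hθ hθσ hθ' hθ'σ)
  exact hbj'
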